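/- There exists a constant C > 0 depending only on α and β (one may take C = 5|α|/8) with the following property: for all real numbers ξ₁, ξ₂, τ₁, τ₂, setting ξ = ξ₁ + ξ₂, τ = τ₁ + τ₂, σ = τ + φ(ξ), σ₁ = τ₁ + φ(ξ₁), σ₂ = τ₂ + φ(ξ₂), if |ξ| ≥ 2a or |ξ₁| ≥ 2a, then max{|σ|, |σ₁|, |σ₂|} ≥ C · |ξ| · |ξ₁| · |ξ₂| · max{ξ², ξ₁²}. -/

import Mathlib

/-!
The τ-variables cancel in σ − σ₁ − σ₂, leaving the resonance function
φ(ξ₁ + ξ₂) − φ(ξ₁) − φ(ξ₂) = ξ₁ ξ₂ (ξ₁ + ξ₂) (5α Q − 3β) with Q = ξ₁² + ξ₁ξ₂ + ξ₂².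
Since Q ≥ max{ξ², ξ₁²}/2 and this maximum is at least 4a², the choice of a makes 3|β| at most a
quarter of 5|α|Q, so |5αQ − 3β| ≥ 15|α| max{ξ², ξ₁²}/8; and max{|σ|, |σ₁|, |σ₂|} is at least a
third of |σ − σ₁ − σ₂|.
-/

open MeasureTheory

noncomputable section

/-- The Kawahara phase function φ(ξ) = αξ⁵ − βξ³. -/
def kPhi (α β ξ : ℝ) : ℝ := α * ξ ^ 5 - β * ξ ^ 3

/-- Space-time Fourier transform 𝓕u(ξ,τ) = (2π)⁻¹ ∫ e^{-i(xξ+tτ)} u(x,t) dx dt. -/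
def FT2 (u : ℝ × ℝ → ℂ) (ξ τ : ℝ) : ℂ :=
  ((1 / (2 * Real.pi) : ℝ) : ℂ) *
    ∫ p : ℝ × ℝ, Complex.exp (-Complex.I * ((p.1 * ξ + p.2 * τ : ℝ) : ℂ)) * u p

/-- Bourgain norm ‖u‖_{X_{s,b}} associated with the Kawahara equation. -/
def XsbNorm (α β s b : ℝ) (u : ℝ × ℝ → ℂ) : ℝ :=
  (∫ q : ℝ × ℝ, (1 + q.1 ^ 2) ^ s * (1 + (q.2 + kPhi α β q.1) ^ 2) ^ b *
    ‖FT2 u q.1 q.2‖ ^ 2) ^ ((1 : ℝ) / 2)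

/-- Spatial Fourier transform 𝓕ₓf(ξ) = (2π)^{-1/2} ∫ e^{-ixξ} f(x) dx. -/
def FT1 (f : ℝ → ℂ) (ξ : ℝ) : ℂ :=
  (((Real.sqrt (2 * Real.pi))⁻¹ : ℝ) : ℂ) *
    ∫ x : ℝ, Complex.exp (-Complex.I * ((x * ξ : ℝ) : ℂ)) * f x

/-- Sobolev norm ‖f‖_{H^s}. -/
def HsNorm (s : ℝ) (f : ℝ → ℂ) : ℝ :=
  (∫ ξ : ℝ, (1 + ξ ^ 2) ^ s * ‖FT1 f ξ‖ ^ 2) ^ ((1 : ℝ) / 2)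

/-- Kawahara free propagator (U(t)f)(x). -/
def Uprop (α β t : ℝ) (f : ℝ → ℂ) (x : ℝ) : ℂ :=
  (((Real.sqrt (2 * Real.pi))⁻¹ : ℝ) : ℂ) *
    ∫ ξ : ℝ, Complex.exp (Complex.I * ((x * ξ - t * kPhi α β ξ : ℝ) : ℂ)) * FT1 f ξ

/-- The constant a = max{1, (2|3β/(5α)|)^{1/2}}. -/
def aConst (α β : ℝ) : ℝ := max 1 (Real.sqrt (2 * |3 * β / (5 * α)|))

/-- The Fourier multiplier operator Dₓ^θ P^D in the x-variable:
    multiplier |ξ|^θ · 1_{|ξ|≥D}. -/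
def PD (D θ : ℝ) (u : ℝ × ℝ → ℂ) (p : ℝ × ℝ) : ℂ :=
  (((Real.sqrt (2 * Real.pi))⁻¹ : ℝ) : ℂ) *
    ∫ ξ : ℝ, Complex.exp (Complex.I * ((p.1 * ξ : ℝ) : ℂ)) *
      (((if D ≤ |ξ| then |ξ| ^ θ else 0 : ℝ)) : ℂ) * FT1 (fun y => u (y, p.2)) ξ

/-- High-frequency projection P^D on functions of one variable. -/
def PDf (D : ℝ) (f : ℝ → ℂ) (x : ℝ) : ℂ :=
  (((Real.sqrt (2 * Real.pi))⁻¹ : ℝ) : ℂ) *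
    ∫ ξ : ℝ, Complex.exp (Complex.I * ((x * ξ : ℝ) : ℂ)) *
      (((if D ≤ |ξ| then 1 else 0 : ℝ)) : ℂ) * FT1 f ξ

lemma kPhi_add_sub_sub (α β ξ₁ ξ₂ : ℝ) :
    kPhi α β (ξ₁ + ξ₂) - kPhi α β ξ₁ - kPhi α β ξ₂ =
      ξ₁ * ξ₂ * (ξ₁ + ξ₂) * (5 * α * (ξ₁ ^ 2 + ξ₁ * ξ₂ + ξ₂ ^ 2) - 3 * β) := by
  unfold kPhi
  ring

lemma abs_sub_sub_le_three_mul_max (x y z : ℝ) :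
    |x - y - z| ≤ 3 * max |x| (max |y| |z|) := by
  have hx : |x| ≤ max |x| (max |y| |z|) := le_max_left _ _
  have hy : |y| ≤ max |x| (max |y| |z|) := (le_max_left _ _).trans (le_max_right _ _)
  have hz : |z| ≤ max |x| (max |y| |z|) := (le_max_right _ _).trans (le_max_right _ _)
  calc |x - y - z| ≤ |x| + |y| + |z| := (abs_sub _ _).trans (by gcongr; exact abs_sub _ _)
    _ ≤ 3 * max |x| (max |y| |z|) := by linarith

lemma max_sq_le_two_mul_sq_add_mul_add_sq (x y : ℝ) :
    max ((x + y) ^ 2) (x ^ 2) ≤ 2 * (x ^ 2 + x * y + y ^ 2) :=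
  max_le (by nlinarith [sq_nonneg x, sq_nonneg y]) (by nlinarith [sq_nonneg (x + y)])

lemma sq_le_max_sq_of_le_abs_or_le_abs {c x y : ℝ} (hc : 0 ≤ c) (h : c ≤ |x| ∨ c ≤ |y|) :
    c ^ 2 ≤ max (x ^ 2) (y ^ 2) := by
  rcases h with h | h
  · exact le_max_of_le_left (sq_abs x ▸ pow_le_pow_left₀ hc h 2)
  · exact le_max_of_le_right (sq_abs y ▸ pow_le_pow_left₀ hc h 2)

lemma one_le_aConst (α β : ℝ) : 1 ≤ aConst α β := le_max_left _ _

lemma six_mul_abs_le_aConst_sq {α : ℝ} (β : ℝ) (hα : α ≠ 0) :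
    6 * |β| ≤ 5 * |α| * aConst α β ^ 2 := by
  have hr : 0 ≤ 2 * |3 * β / (5 * α)| := by positivity
  have hsq : 2 * |3 * β / (5 * α)| ≤ aConst α β ^ 2 := by
    rw [← Real.sq_sqrt hr]
    exact pow_le_pow_left₀ (Real.sqrt_nonneg _) (le_max_right _ _) 2
  have h5α : 0 < 5 * |α| := by positivity
  have hquot : 2 * |3 * β / (5 * α)| * (5 * |α|) = 6 * |β| := by
    rw [abs_div, abs_mul, abs_mul, abs_of_pos (by norm_num : (0 : ℝ) < 3),
      abs_of_pos (by norm_num : (0 : ℝ) < 5)]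
    field_simp
    ring
  rw [← hquot, mul_comm (5 * |α|)]
  exact mul_le_mul_of_nonneg_right hsq h5α.le

lemma abs_five_mul_mul_sub_three_mul_ge {α β Q M : ℝ} (hMQ : M ≤ 2 * Q)
    (hβ : 24 * |β| ≤ 5 * |α| * M) :
    15 * |α| * M / 8 ≤ |5 * α * Q - 3 * β| := by
  have hQ : 5 * |α| * Q ≤ |5 * α * Q| := by
    rw [abs_mul, abs_mul, abs_of_pos (by norm_num : (0 : ℝ) < 5)]
    exact mul_le_mul_of_nonneg_left (le_abs_self Q) (by positivity)
  have hβ' : |3 * β| = 3 * |β| := by rw [abs_mul, abs_of_pos (by norm_num : (0 : ℝ) < 3)]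
  have hαMQ : 5 * |α| * M ≤ 2 * (5 * |α| * Q) := by nlinarith [abs_nonneg α]
  linarith [abs_sub_abs_le_abs_sub (5 * α * Q) (3 * β)]

/-- lower bound on the maximal modulation. -/
theorem max_modulation_lower_bound (α β : ℝ) (hα : α ≠ 0) :
    ∃ C : ℝ, 0 < C ∧ ∀ ξ₁ ξ₂ τ₁ τ₂ : ℝ,
      (2 * aConst α β ≤ |ξ₁ + ξ₂| ∨ 2 * aConst α β ≤ |ξ₁|) →
      C * |ξ₁ + ξ₂| * |ξ₁| * |ξ₂| * max ((ξ₁ + ξ₂) ^ 2) (ξ₁ ^ 2) ≤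
        max |τ₁ + τ₂ + kPhi α β (ξ₁ + ξ₂)|
          (max |τ₁ + kPhi α β ξ₁| |τ₂ + kPhi α β ξ₂|) := by
  refine ⟨5 * |α| / 8, by positivity, fun ξ₁ ξ₂ τ₁ τ₂ hlarge => ?_⟩
  set M := max ((ξ₁ + ξ₂) ^ 2) (ξ₁ ^ 2)
  have hM : (2 * aConst α β) ^ 2 ≤ M :=
    sq_le_max_sq_of_le_abs_or_le_abs (by linarith [one_le_aConst α β]) hlarge
  have hfactor := abs_five_mul_mul_sub_three_mul_ge (β := β)
    (max_sq_le_two_mul_sq_add_mul_add_sq ξ₁ ξ₂)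
    (by nlinarith [six_mul_abs_le_aConst_sq β hα, abs_nonneg α])
  have hmax := abs_sub_sub_le_three_mul_max (τ₁ + τ₂ + kPhi α β (ξ₁ + ξ₂))
    (τ₁ + kPhi α β ξ₁) (τ₂ + kPhi α β ξ₂)
  rw [show τ₁ + τ₂ + kPhi α β (ξ₁ + ξ₂) - (τ₁ + kPhi α β ξ₁) - (τ₂ + kPhi α β ξ₂) =
      kPhi α β (ξ₁ + ξ₂) - kPhi α β ξ₁ - kPhi α β ξ₂ by ring,
    kPhi_add_sub_sub, abs_mul, abs_mul, abs_mul] at hmax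
  calc 5 * |α| / 8 * |ξ₁ + ξ₂| * |ξ₁| * |ξ₂| * M
      = |ξ₁| * |ξ₂| * |ξ₁ + ξ₂| * (15 * |α| * M / 8) / 3 := by ring
    _ ≤ |ξ₁| * |ξ₂| * |ξ₁ + ξ₂| * |5 * α * (ξ₁ ^ 2 + ξ₁ * ξ₂ + ξ₂ ^ 2) - 3 * β| / 3 := by
      gcongr
    _ ≤ _ := by linarith

end
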